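/- arXiv:2202.12073 — 4 statements merged into one kernel-verified Lean document; each statement's English description precedes it below -/
import Mathlib

section
/- Let a be an integer, m ≥ 2 an integer, g₁ = gcd(a, m), and g₂ = gcd(g₁^⌊log₂ m⌋ mod m, m). Then a is coprime to m/g₂. -/
/-!
If a prime `q` divides both `a` and `m`, then `q ∣ g₁`, and the full power `q ^ k` of `q` in `m`
satisfies `2 ^ k ≤ q ^ k ≤ m`, so `k ≤ ⌊log₂ m⌋` and `q ^ k ∣ g₁ ^ ⌊log₂ m⌋`. Hence `q ^ k ∣ g₂`,
which leaves no factor `q` in `m / g₂`.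
-/

namespace Nat

theorem factorization_le_log_two {n p : ℕ} (hn : n ≠ 0) (hp : p.Prime) :
    n.factorization p ≤ log 2 n :=
  le_log_of_pow_le one_lt_two <|
    (Nat.pow_le_pow_left hp.two_le _).trans (le_of_dvd (pos_of_ne_zero hn) (ordProj_dvd n p))

theorem coprime_div_gcd_pow_log_two (g : ℕ) {n : ℕ} (hn : n ≠ 0) :
    Coprime g (n / gcd (g ^ log 2 n) n) := by
  set d := gcd (g ^ log 2 n) n
  refine coprime_of_dvd fun q hq hqg hqnd => pow_succ_factorization_not_dvd hn hq ?_
  have hqd : q ^ n.factorization q ∣ d :=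
    dvd_gcd ((pow_dvd_pow_of_dvd hqg _).trans (pow_dvd_pow g (factorization_le_log_two hn hq)))
      (ordProj_dvd n q)
  have hdn : d ∣ n := gcd_dvd_right _ _
  simpa only [← pow_succ, Nat.mul_div_cancel' hdn] using mul_dvd_mul hqd hqnd

end Nat

theorem stmt_4 (a : ℤ) (m : ℕ) (hm : 2 ≤ m) (g₁ g₂ : ℕ)
    (hg₁ : g₁ = Int.gcd a m)
    (hg₂ : g₂ = Nat.gcd (g₁ ^ Nat.log 2 m % m) m) :
    Int.gcd a (m / g₂) = 1 := by
  have hg₂' : g₂ = Nat.gcd (g₁ ^ Nat.log 2 m) m := by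
    rw [hg₂, ← Nat.gcd_rec, Nat.gcd_comm]
  have hcop : Nat.Coprime g₁ (m / g₂) := hg₂' ▸ Nat.coprime_div_gcd_pow_log_two g₁ (by omega)
  have hdvd_m : m / g₂ ∣ m := Nat.div_dvd_of_dvd (hg₂' ▸ Nat.gcd_dvd_right _ _)
  -- `gcd a (m / g₂) = gcd (gcd a m) (m / g₂)` because `m / g₂ ∣ m`
  rw [← Int.natCast_div, Int.gcd_eq_natAbs, Int.natAbs_natCast, ← Nat.gcd_eq_right hdvd_m,
    ← Nat.gcd_assoc, ← Int.natAbs_natCast m, ← Int.gcd_eq_natAbs, ← hg₁]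
  exact hcop
end

section
/- Let a be an integer, m ≥ 2 an integer, and p a prime with p dividing m and p² > m. Let g₁ = gcd(a, m) and g₂ = gcd(g₁^⌊log₂ m⌋ mod m, m). Define m' = g₁ if g₁² > m, and m' = m/g₂ otherwise. Then p divides m'. -/
/-!
Since `p ^ 2 > m`, the prime `p` divides `m` exactly once and every divisor `d` of `m` prime to `p`
divides `m / p < p`, so `d ^ 2 < m`. Hence if `p ∣ g₁` then `g₁ ^ 2 ≥ p ^ 2 > m` and `m' = g₁`;
otherwise `g₁ ^ 2 < m`, and `p` does not divide `g₂`, a divisor of `g₁ ^ k mod m`, so `p ∣ m / g₂`.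
-/

namespace Nat

theorem sq_lt_of_dvd_of_not_prime_dvd {p m d : ℕ} (hp : p.Prime) (hpm : p ∣ m) (hm : m < p ^ 2)
    (hm0 : m ≠ 0) (hdm : d ∣ m) (hpd : ¬p ∣ d) : d ^ 2 < m := by
  obtain ⟨s, rfl⟩ := hpm
  have hs : 0 < s := pos_of_ne_zero (right_ne_zero_of_mul hm0)
  have hsp : s < p := by
    rw [sq] at hm
    exact Nat.lt_of_mul_lt_mul_left hm
  have hds : d ≤ s :=
    le_of_dvd hs (((hp.coprime_iff_not_dvd).mpr hpd).symm.dvd_of_dvd_mul_left hdm)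
  calc d ^ 2 ≤ s * s := by rw [sq]; exact Nat.mul_le_mul hds hds
    _ < p * s := Nat.mul_lt_mul_of_pos_right hsp hs

theorem Prime.dvd_div_of_not_dvd {p m d : ℕ} (hp : p.Prime) (hpm : p ∣ m) (hdm : d ∣ m)
    (hpd : ¬p ∣ d) : p ∣ m / d :=
  dvd_div_of_mul_dvd (((hp.coprime_iff_not_dvd).mpr hpd).symm.mul_dvd_of_dvd_of_dvd hdm hpm)

theorem Prime.not_dvd_gcd_pow_mod {p m g : ℕ} (hp : p.Prime) (hpm : p ∣ m) (hpg : ¬p ∣ g)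
    (k : ℕ) : ¬p ∣ gcd (g ^ k % m) m := fun h =>
  hpg (hp.dvd_of_dvd_pow ((dvd_mod_iff hpm).mp (h.trans (gcd_dvd_left _ _))))

end Nat

theorem stmt_6 (a : ℤ) (m : ℕ) (hm : 2 ≤ m) (p : ℕ) (hp : p.Prime)
    (hpm : p ∣ m) (hp2 : p ^ 2 > m) (g₁ g₂ m' : ℕ)
    (hg₁ : g₁ = Int.gcd a m)
    (hg₂ : g₂ = Nat.gcd (g₁ ^ Nat.log 2 m % m) m)
    (hm' : m' = if g₁ ^ 2 > m then g₁ else m / g₂) :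
    p ∣ m' := by
  have hm0 : m ≠ 0 := by omega
  have hg₁m : g₁ ∣ m := hg₁ ▸ Int.gcd_dvd_natAbs_right a m
  subst hm'
  by_cases hpg : p ∣ g₁
  · have hpg₁ : p ≤ g₁ := Nat.le_of_dvd (Nat.pos_of_dvd_of_pos hg₁m (by omega)) hpg
    rw [if_pos (hp2.trans_le (Nat.pow_le_pow_left hpg₁ 2))]
    exact hpg
  · rw [if_neg (Nat.sq_lt_of_dvd_of_not_prime_dvd hp hpm hp2 hm0 hg₁m hpg).not_gt, hg₂]
    exact hp.dvd_div_of_not_dvd hpm (Nat.gcd_dvd_right _ _) (hp.not_dvd_gcd_pow_mod hpm hpg _)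
end

section
/- Let a be an integer, m ≥ 2 an integer, g₁ = gcd(a, m), g₂ = gcd(g₁^⌊log₂ m⌋ mod m, m), and m' = g₁ if g₁² > m else m/g₂. Then a is either divisible by m' or coprime to m' (so a mod m' is either zero or invertible). -/
/-!
If `g₁² > m` then `m' = g₁ = gcd(a, m)` divides `a`. Otherwise, every prime exponent of `m` is at
most `log₂ m`, so `g₂ = gcd(g₁^⌊log₂ m⌋, m)` contains the full `p`-part of `m` for each prime `p`
of `g₁`; hence `m / g₂` has no prime factor in common with `a`.
-/

theorem Nat.factorization_le_log_two_s7 (m p : ℕ) : m.factorization p ≤ Nat.log 2 m := by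
  rcases eq_or_ne m 0 with rfl | hm
  · simp
  by_cases hp : p.Prime
  · exact Nat.le_log_of_pow_le one_lt_two
      ((Nat.pow_le_pow_left hp.two_le _).trans (Nat.ordProj_le p hm))
  · simp [Nat.factorization_eq_zero_of_not_prime m hp]

theorem Nat.coprime_div_gcd_pow_gcd_of_factorization_le {n m k : ℕ} (hm : m ≠ 0)
    (hk : ∀ p, m.factorization p ≤ k) :
    Nat.Coprime n (m / Nat.gcd (Nat.gcd n m ^ k) m) := by
  set g := Nat.gcd n m
  set d := Nat.gcd (g ^ k) m
  have hdm : d ∣ m := Nat.gcd_dvd_right _ _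
  have hg : g ≠ 0 := Nat.gcd_ne_zero_right hm
  refine Nat.coprime_of_dvd fun p hp hpn hpq => ?_
  have hpg : p ∣ g := Nat.dvd_gcd hpn (hpq.trans (Nat.div_dvd_of_dvd hdm))
  have hd : d.factorization p = m.factorization p := by
    have := hp.factorization_pos_of_dvd hg hpg
    rw [Nat.factorization_gcd (pow_ne_zero _ hg) hm, Finsupp.inf_apply,
      Nat.factorization_pow, Finsupp.smul_apply, smul_eq_mul]
    exact min_eq_right ((hk p).trans (Nat.le_mul_of_pos_right k this))
  have hq : m / d ≠ 0 := (Nat.div_pos (Nat.le_of_dvd (Nat.pos_of_ne_zero hm) hdm)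
    (Nat.pos_of_dvd_of_pos hdm (Nat.pos_of_ne_zero hm))).ne'
  have := hp.factorization_pos_of_dvd hq hpq
  rw [Nat.factorization_div hdm, Finsupp.tsub_apply, hd, Nat.sub_self] at this
  exact this.false

theorem stmt_7 (a : ℤ) (m : ℕ) (hm : 2 ≤ m) (g₁ g₂ m' : ℕ)
    (hg₁ : g₁ = Int.gcd a m)
    (hg₂ : g₂ = Nat.gcd (g₁ ^ Nat.log 2 m % m) m)
    (hm' : m' = if g₁ ^ 2 > m then g₁ else m / g₂) :
    (m' : ℤ) ∣ a ∨ Int.gcd a m' = 1 := by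
  split_ifs at hm'
  · exact .inl (hm' ▸ hg₁ ▸ Int.gcd_dvd_left _ _)
  · right
    have hg₂' : g₂ = Nat.gcd (Nat.gcd a.natAbs m ^ Nat.log 2 m) m := by
      rw [hg₂, ← Nat.gcd_rec, Nat.gcd_comm, hg₁]
      rfl
    subst hm' hg₂'
    exact Nat.coprime_div_gcd_pow_gcd_of_factorization_le (by omega)
      (Nat.factorization_le_log_two_s7 m)
end

section
/- Let m ≥ 2 and p a prime with p dividing m and p² > m, and let a be an integer. If a ≡ 0 (mod p), then a is not invertible modulo m; moreover, with m' the output of NewModulus(a, m) (m' = gcd(a,m) if gcd(a,m)² > m, else m' = m/gcd(gcd(a,m)^⌊log₂ m⌋ mod m, m)), a ≡ 0 (mod m'). -/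
theorem ZMod.not_isUnit_intCast_of_dvd {m d : ℕ} (hd : d ≠ 1) (hdm : d ∣ m) {a : ℤ}
    (hda : (d : ℤ) ∣ a) : ¬IsUnit (a : ZMod m) := by
  intro ha
  have hdu : IsUnit (d : ZMod m) := by
    refine isUnit_of_dvd_unit ?_ ha
    simpa using (Int.castRingHom (ZMod m)).map_dvd hda
  exact hd (((ZMod.isUnit_iff_coprime d m).mp hdu).eq_one_of_dvd hdm)

theorem Int.lt_sq_gcd_of_dvd {a : ℤ} {m d : ℕ} (ha : a ≠ 0) (hda : (d : ℤ) ∣ a) (hdm : d ∣ m)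
    (hm : m < d ^ 2) : m < Int.gcd a m ^ 2 := by
  have hd_gcd : d ∣ Int.gcd a m := by
    exact_mod_cast Int.dvd_coe_gcd hda (Int.natCast_dvd_natCast.mpr hdm)
  have hd_le : d ≤ Int.gcd a m := Nat.le_of_dvd (Int.gcd_pos_of_ne_zero_left _ ha) hd_gcd
  exact hm.trans_le (Nat.pow_le_pow_left hd_le 2)

theorem stmt_18_general (m : ℕ) (p : ℕ) (hp : p.Prime) (hpm : p ∣ m)
    (hp2 : p ^ 2 > m) (a : ℤ) (ha : (p : ℤ) ∣ a) (g₁ g₂ m' : ℕ)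
    (hg₁ : g₁ = Int.gcd a m)
    (hm' : m' = if g₁ ^ 2 > m then g₁ else m / g₂) :
    ¬ IsUnit ((a : ZMod m)) ∧ (m' : ℤ) ∣ a := by
  refine ⟨ZMod.not_isUnit_intCast_of_dvd hp.ne_one hpm ha, ?_⟩
  rcases eq_or_ne a 0 with rfl | ha0
  · exact dvd_zero _
  -- a nonzero multiple of p has gcd with m at least p, so NewModulus takes its first branch
  have hbig : g₁ ^ 2 > m := hg₁ ▸ Int.lt_sq_gcd_of_dvd ha0 ha hpm hp2
  rw [hm', if_pos hbig, hg₁]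
  exact Int.gcd_dvd_left _ _

theorem stmt_18 (m : ℕ) (hm : 2 ≤ m) (p : ℕ) (hp : p.Prime) (hpm : p ∣ m)
    (hp2 : p ^ 2 > m) (a : ℤ) (ha : (p : ℤ) ∣ a) (g₁ g₂ m' : ℕ)
    (hg₁ : g₁ = Int.gcd a m)
    (hg₂ : g₂ = Nat.gcd (g₁ ^ Nat.log 2 m % m) m)
    (hm' : m' = if g₁ ^ 2 > m then g₁ else m / g₂) :
    ¬ IsUnit ((a : ZMod m)) ∧ (m' : ℤ) ∣ a :=
  stmt_18_general m p hp hpm hp2 a ha g₁ g₂ m' hg₁ hm'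
end
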